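/- With D, g, D*, D^s as above, assume all a_{ji} ≠ 0, Tr D = Tr(D²) ≠ 0, and λ_i − λ_j = Tr D for every (i,j) ∈ 𝒜. Setting A_j^i = g_j a_{ji}² / (2 g_i Tr D) for (i,j) ∈ 𝒜, one has the identity of endomorphisms −Tr((D^s)²)·Id − ½[D,D*] + (Tr D)·D^s = (Tr D)·( −(1 + Σ_{(i,j)∈𝒜} A_j^i)·Id − Σ_{(i,j)∈𝒜} A_j^i ( e^j⊗e_j − e^i⊗e_i ) + Σ_i λ_i e^i⊗e_i ). -/

import Mathlib

/-!
Write `D = L + N` with `L = ∑ λ_i e^i⊗e_i` and `N = ∑ a_{ji} e^i⊗e_j`; since `g` is diagonal,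
`D* = L + N'` with `N' = ∑ (g_j / g_i) a_{ji} e^j⊗e_i`. The condition `λ_i − λ_j = Tr D` says that
`N` and `N'` are eigenvectors of `ad L` with eigenvalues `∓ Tr D`. Hence
`[D, D*] = Tr D · (N + N') + [N, N']`, and by cyclicity of the trace `Tr (L N) = Tr (L N') = 0`.
Because the indices of `𝒜` are pairwise distinct, `N² = N'² = 0` while `N N'` and `N' N` are
diagonal with entries `a_{ji}² g_j / g_i = 2 Tr D · A_j^i`. So `Tr (L²) = Tr (D²) = Tr D` and
`Tr ((D^s)²) = Tr D + ½ Tr (N N')`, and all terms involving `N + N'` cancel.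
-/

/-- The endomorphism `e^i ⊗ e_j` of `ℝ^n`, sending the standard basis vector `e i`
to `e j` and the other standard basis vectors to `0`. -/
noncomputable def elemEnd {n : ℕ} (i j : Fin n) : Module.End ℝ (Fin n → ℝ) :=
  (LinearMap.proj i : (Fin n → ℝ) →ₗ[ℝ] ℝ).smulRight (Pi.single j 1)

open Finset
open LinearMap (trace IsAdjointPair)

theorem Finset.sum_mul_sum_eq_sum_mul_of_ne {R ι : Type*} [NonUnitalNonAssocSemiring R]
    {s : Finset ι} {f g : ι → R} (h : ∀ i ∈ s, ∀ j ∈ s, i ≠ j → f i * g j = 0) :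
    (∑ i ∈ s, f i) * ∑ i ∈ s, g i = ∑ i ∈ s, f i * g i := by
  rw [sum_mul_sum]
  exact sum_congr rfl fun i hi => sum_eq_single_of_mem i hi fun j hj hji => h i hi j hj hji.symm

namespace LinearMap.IsAdjointPair

variable {R M : Type*} [CommRing R] [AddCommGroup M] [Module R M] {B : LinearMap.BilinForm R M}

theorem sum {ι : Type*} {s : Finset ι} {f g : ι → Module.End R M}
    (h : ∀ i ∈ s, IsAdjointPair B B (f i) (g i)) :
    IsAdjointPair B B ⇑(∑ i ∈ s, f i) ⇑(∑ i ∈ s, g i) := fun x y => by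
  simp only [map_sum, LinearMap.sum_apply]
  exact sum_congr rfl fun i hi => h i hi x y

theorem right_unique (hB : B.SeparatingRight) {f g g' : Module.End R M}
    (h : IsAdjointPair B B f g) (h' : IsAdjointPair B B f g') : g = g' := by
  ext y : 1
  refine sub_eq_zero.mp (hB _ fun x => ?_)
  rw [map_sub, ← h, ← h', sub_self]

end LinearMap.IsAdjointPair

section Trace

variable {𝕜 V : Type*} [Field 𝕜] [AddCommGroup V] [Module 𝕜 V]

theorem trace_mul_eq_zero_of_commutator_eq_smul {L N : Module.End 𝕜 V} {c : 𝕜} (hc : c ≠ 0)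
    (h : L * N - N * L = c • N) : trace 𝕜 V (L * N) = 0 := by
  have key := congrArg (fun X => trace 𝕜 V (L * X)) h
  simp only [mul_sub, map_sub, mul_smul_comm, map_smul, ← mul_assoc] at key
  rw [LinearMap.trace_mul_cycle 𝕜 L N L, sub_self, smul_eq_mul] at key
  exact (mul_eq_zero.mp key.symm).resolve_left hc

theorem trace_symmPart_identity [CharZero 𝕜] {L N N' D Dstar Ds : Module.End 𝕜 V}
    (hD : D = L + N) (hDstar : Dstar = L + N') (hDs : Ds = (1 / 2 : 𝕜) • (D + Dstar))
    (hT : trace 𝕜 V D ≠ 0) (htr : trace 𝕜 V D = trace 𝕜 V (D ^ 2))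
    (hN : L * N - N * L = -trace 𝕜 V D • N) (hN' : L * N' - N' * L = trace 𝕜 V D • N')
    (hNN : N * N = 0) (hN'N' : N' * N' = 0) :
    (-trace 𝕜 V (Ds ^ 2)) • (1 : Module.End 𝕜 V) + (-(1 / 2 : 𝕜)) • (D * Dstar - Dstar * D) +
        trace 𝕜 V D • Ds =
      (-(trace 𝕜 V D + (1 / 2) * trace 𝕜 V (N * N'))) • 1 - (1 / 2 : 𝕜) • (N * N' - N' * N) +
        trace 𝕜 V D • L := by
  set T := trace 𝕜 V D
  have hLN := trace_mul_eq_zero_of_commutator_eq_smul (neg_ne_zero.mpr hT) hN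
  have hLN' := trace_mul_eq_zero_of_commutator_eq_smul hT hN'
  have hNL : trace 𝕜 V (N * L) = 0 := by rw [LinearMap.trace_mul_comm, hLN]
  have hN'L : trace 𝕜 V (N' * L) = 0 := by rw [LinearMap.trace_mul_comm, hLN']
  have hN'N : trace 𝕜 V (N' * N) = trace 𝕜 V (N * N') := LinearMap.trace_mul_comm _ _ _
  have hL : trace 𝕜 V (L * L) = T := by
    rw [htr, sq, hD]
    simp only [mul_add, add_mul, map_add, hLN, hNL, hNN, add_zero]
  have hDs2 : trace 𝕜 V (Ds ^ 2) = T + (1 / 2) * trace 𝕜 V (N * N') := by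
    simp only [hDs, hD, hDstar, sq, smul_mul_smul_comm, mul_add, add_mul, map_add, map_smul, hLN,
      hNL, hLN', hN'L, hNN, hN'N', hN'N, hL, map_zero, smul_eq_mul]
    ring
  have hcomm : D * Dstar - Dstar * D = T • N' + T • N + (N * N' - N' * N) := by
    have : D * Dstar - Dstar * D =
        (L * N' - N' * L) - (L * N - N * L) + (N * N' - N' * N) := by
      rw [hD, hDstar]; noncomm_ring
    rw [this, hN, hN', neg_smul, sub_neg_eq_add]
  rw [hDs2, hcomm, hDs, hD, hDstar]
  module

end Trace

section elemEnd

variable {n : ℕ}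

theorem elemEnd_apply (i j : Fin n) (x : Fin n → ℝ) : elemEnd i j x = Pi.single j (x i) := by
  ext m
  simp [elemEnd, Pi.single_apply]

theorem elemEnd_mul_elemEnd (i j k l : Fin n) :
    elemEnd i j * elemEnd k l = if i = l then elemEnd k j else 0 := by
  ext x m
  split_ifs with h
  · simp [elemEnd_apply, h]
  · simp [elemEnd_apply, Pi.single_apply, h]

theorem elemEnd_mul_elemEnd_self (i j k : Fin n) : elemEnd i j * elemEnd k i = elemEnd k j := by
  rw [elemEnd_mul_elemEnd, if_pos rfl]

theorem elemEnd_mul_elemEnd_of_ne {i l : Fin n} (h : i ≠ l) (j k : Fin n) :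
    elemEnd i j * elemEnd k l = 0 := by
  rw [elemEnd_mul_elemEnd, if_neg h]

theorem trace_elemEnd (i j : Fin n) : trace ℝ _ (elemEnd i j) = if i = j then 1 else 0 := by
  rw [LinearMap.trace_eq_matrix_trace ℝ (Pi.basisFun ℝ (Fin n))]
  simp [Matrix.trace, elemEnd_apply, Pi.single_apply, eq_comm]

theorem diag_mul_elemEnd (lam : Fin n → ℝ) (i j : Fin n) :
    (∑ k, lam k • elemEnd k k) * elemEnd i j = lam j • elemEnd i j := by
  simp [sum_mul, elemEnd_mul_elemEnd]

theorem elemEnd_mul_diag (lam : Fin n → ℝ) (i j : Fin n) :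
    elemEnd i j * (∑ k, lam k • elemEnd k k) = lam i • elemEnd i j := by
  simp [mul_sum, elemEnd_mul_elemEnd]

theorem diag_mul_sub_mul_diag_sum {ι : Type*} (lam : Fin n → ℝ) {s : Finset ι} (b : ι → ℝ)
    {u v : ι → Fin n} {c : ℝ} (h : ∀ p ∈ s, lam (v p) - lam (u p) = c) :
    (∑ k, lam k • elemEnd k k) * (∑ p ∈ s, b p • elemEnd (u p) (v p)) -
        (∑ p ∈ s, b p • elemEnd (u p) (v p)) * (∑ k, lam k • elemEnd k k) =
      c • ∑ p ∈ s, b p • elemEnd (u p) (v p) := by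
  rw [mul_sum, sum_mul, ← sum_sub_distrib, smul_sum]
  refine sum_congr rfl fun p hp => ?_
  rw [mul_smul_comm, smul_mul_assoc, diag_mul_elemEnd, elemEnd_mul_diag, ← h p hp]
  module

theorem toBilin'_diagonal_apply (g x y : Fin n → ℝ) :
    Matrix.toBilin' (Matrix.diagonal g) x y = ∑ i, g i * x i * y i := by
  simp only [Matrix.toBilin'_apply, Matrix.diagonal_apply, mul_ite, ite_mul, mul_zero, zero_mul,
    sum_ite_eq, mem_univ, if_true]
  exact sum_congr rfl fun i _ => by rw [mul_comm (x i)]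

theorem isAdjointPair_elemEnd {g : Fin n → ℝ} {i : Fin n} (hi : g i ≠ 0) (j : Fin n) :
    IsAdjointPair (Matrix.toBilin' (Matrix.diagonal g)) (Matrix.toBilin' (Matrix.diagonal g))
      (elemEnd i j) ((g j / g i) • elemEnd j i) := fun x y => by
  simp only [elemEnd_apply, toBilin'_diagonal_apply, Pi.single_apply, mul_ite, mul_zero, ite_mul,
    zero_mul, sum_ite_eq', mem_univ, ↓reduceIte, Pi.smul_apply, map_smul, smul_eq_mul]
  field_simp

theorem separatingRight_toBilin'_diagonal {g : Fin n → ℝ} (hg : ∀ i, g i ≠ 0) :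
    (Matrix.toBilin' (Matrix.diagonal g)).SeparatingRight :=
  (Matrix.nondegenerate_of_det_ne_zero
    (by simp [Matrix.det_diagonal, prod_ne_zero_iff, hg])).toBilin'.2

theorem isAdjointPair_diag_add_sum {g : Fin n → ℝ} (hg : ∀ i, g i ≠ 0) (lam : Fin n → ℝ)
    (s : Finset (Fin n × Fin n)) (a : Fin n × Fin n → ℝ) :
    IsAdjointPair (Matrix.toBilin' (Matrix.diagonal g)) (Matrix.toBilin' (Matrix.diagonal g))
      ((∑ i, lam i • elemEnd i i) + ∑ p ∈ s, a p • elemEnd p.1 p.2)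
      ((∑ i, lam i • elemEnd i i) + ∑ p ∈ s, (g p.2 / g p.1 * a p) • elemEnd p.2 p.1) := by
  refine IsAdjointPair.add (IsAdjointPair.sum fun i _ => ?_) (IsAdjointPair.sum fun p _ => ?_)
  · have h := isAdjointPair_elemEnd (hg i) i
    rw [div_self (hg i), one_smul] at h
    exact h.smul (lam i)
  · rw [mul_comm, ← smul_smul]
    exact (isAdjointPair_elemEnd (hg p.1) p.2).smul (a p)

end elemEnd

section Matching

variable {n : ℕ} {𝒜 : Finset (Fin n × Fin n)}

theorem sum_smul_elemEnd_mul_self (hA₁ : ∀ p ∈ 𝒜, p.1 ≠ p.2)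
    (hA₂ : ∀ p ∈ 𝒜, ∀ q ∈ 𝒜, p ≠ q → p.1 ≠ q.1 ∧ p.1 ≠ q.2 ∧ p.2 ≠ q.1 ∧ p.2 ≠ q.2)
    (a : Fin n × Fin n → ℝ) :
    (∑ p ∈ 𝒜, a p • elemEnd p.1 p.2) * (∑ p ∈ 𝒜, a p • elemEnd p.1 p.2) = 0 := by
  rw [sum_mul_sum]
  refine sum_eq_zero fun p hp => sum_eq_zero fun q hq => ?_
  have hpq : p.1 ≠ q.2 := by
    obtain rfl | hne := eq_or_ne p q
    exacts [hA₁ p hp, (hA₂ p hp q hq hne).2.1]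
  rw [smul_mul_smul_comm, elemEnd_mul_elemEnd_of_ne hpq, smul_zero]

theorem sum_smul_elemEnd_swap_mul_self (hA₁ : ∀ p ∈ 𝒜, p.1 ≠ p.2)
    (hA₂ : ∀ p ∈ 𝒜, ∀ q ∈ 𝒜, p ≠ q → p.1 ≠ q.1 ∧ p.1 ≠ q.2 ∧ p.2 ≠ q.1 ∧ p.2 ≠ q.2)
    (a : Fin n × Fin n → ℝ) :
    (∑ p ∈ 𝒜, a p • elemEnd p.2 p.1) * (∑ p ∈ 𝒜, a p • elemEnd p.2 p.1) = 0 := by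
  rw [sum_mul_sum]
  refine sum_eq_zero fun p hp => sum_eq_zero fun q hq => ?_
  have hpq : p.2 ≠ q.1 := by
    obtain rfl | hne := eq_or_ne p q
    exacts [(hA₁ p hp).symm, (hA₂ p hp q hq hne).2.2.1]
  rw [smul_mul_smul_comm, elemEnd_mul_elemEnd_of_ne hpq, smul_zero]

theorem sum_smul_elemEnd_mul_swap
    (hA₂ : ∀ p ∈ 𝒜, ∀ q ∈ 𝒜, p ≠ q → p.1 ≠ q.1 ∧ p.1 ≠ q.2 ∧ p.2 ≠ q.1 ∧ p.2 ≠ q.2)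
    (a b : Fin n × Fin n → ℝ) :
    (∑ p ∈ 𝒜, a p • elemEnd p.1 p.2) * (∑ p ∈ 𝒜, b p • elemEnd p.2 p.1) =
      ∑ p ∈ 𝒜, (a p * b p) • elemEnd p.2 p.2 := by
  rw [sum_mul_sum_eq_sum_mul_of_ne fun p hp q hq hne => by
    rw [smul_mul_smul_comm, elemEnd_mul_elemEnd_of_ne (hA₂ p hp q hq hne).1, smul_zero]]
  simp only [smul_mul_smul_comm, elemEnd_mul_elemEnd_self]

theorem sum_smul_elemEnd_swap_mul
    (hA₂ : ∀ p ∈ 𝒜, ∀ q ∈ 𝒜, p ≠ q → p.1 ≠ q.1 ∧ p.1 ≠ q.2 ∧ p.2 ≠ q.1 ∧ p.2 ≠ q.2)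
    (a b : Fin n × Fin n → ℝ) :
    (∑ p ∈ 𝒜, a p • elemEnd p.2 p.1) * (∑ p ∈ 𝒜, b p • elemEnd p.1 p.2) =
      ∑ p ∈ 𝒜, (a p * b p) • elemEnd p.1 p.1 := by
  rw [sum_mul_sum_eq_sum_mul_of_ne fun p hp q hq hne => by
    rw [smul_mul_smul_comm, elemEnd_mul_elemEnd_of_ne (hA₂ p hp q hq hne).2.2.2, smul_zero]]
  simp only [smul_mul_smul_comm, elemEnd_mul_elemEnd_self]

theorem trace_sum_smul_elemEnd_self (s : Finset (Fin n × Fin n)) (a : Fin n × Fin n → ℝ) :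
    trace ℝ _ (∑ p ∈ s, a p • elemEnd p.2 p.2) = ∑ p ∈ s, a p := by
  simp [trace_elemEnd]

end Matching

theorem diagonal_part_identity_general
    {n : ℕ} (𝒜 : Finset (Fin n × Fin n))
    (hA₁ : ∀ p ∈ 𝒜, p.1 ≠ p.2)
    (hA₂ : ∀ p ∈ 𝒜, ∀ q ∈ 𝒜, p ≠ q →
      p.1 ≠ q.1 ∧ p.1 ≠ q.2 ∧ p.2 ≠ q.1 ∧ p.2 ≠ q.2)
    (lam : Fin n → ℝ) (a : Fin n × Fin n → ℝ)
    (D : Module.End ℝ (Fin n → ℝ))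
    (hD : D = (∑ i, lam i • elemEnd i i) + ∑ p ∈ 𝒜, a p • elemEnd p.1 p.2)
    (htr : LinearMap.trace ℝ (Fin n → ℝ) D = LinearMap.trace ℝ (Fin n → ℝ) (D ^ 2))
    (htr0 : LinearMap.trace ℝ (Fin n → ℝ) D ≠ 0)
    (hlam : ∀ p ∈ 𝒜, lam p.1 - lam p.2 = LinearMap.trace ℝ (Fin n → ℝ) D)
    (gv : Fin n → ℝ) (hg : ∀ i, gv i ≠ 0)
    (Dstar : Module.End ℝ (Fin n → ℝ))
    (hadj : ∀ x y : Fin n → ℝ,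
      (∑ i, gv i * (D x) i * y i) = ∑ i, gv i * x i * (Dstar y) i)
    (Ds : Module.End ℝ (Fin n → ℝ)) (hDs : Ds = (1 / 2 : ℝ) • (D + Dstar))
    (A : Fin n × Fin n → ℝ)
    (hA : ∀ p ∈ 𝒜, A p = gv p.2 * a p ^ 2 /
      (2 * gv p.1 * LinearMap.trace ℝ (Fin n → ℝ) D)) :
    (-(LinearMap.trace ℝ (Fin n → ℝ) (Ds ^ 2))) • (1 : Module.End ℝ (Fin n → ℝ)) +
        (-(1 / 2 : ℝ)) • (D * Dstar - Dstar * D) +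
        LinearMap.trace ℝ (Fin n → ℝ) D • Ds =
      LinearMap.trace ℝ (Fin n → ℝ) D •
        ((-(1 + ∑ p ∈ 𝒜, A p)) • (1 : Module.End ℝ (Fin n → ℝ)) -
          (∑ p ∈ 𝒜, A p • (elemEnd p.2 p.2 - elemEnd p.1 p.1)) +
          ∑ i, lam i • elemEnd i i) := by
  set c : Fin n × Fin n → ℝ := fun p => gv p.2 / gv p.1 * a p
  have hDstar : Dstar = (∑ i, lam i • elemEnd i i) + ∑ p ∈ 𝒜, c p • elemEnd p.2 p.1 := by
    have hadj' : IsAdjointPair (Matrix.toBilin' (Matrix.diagonal gv))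
        (Matrix.toBilin' (Matrix.diagonal gv)) D Dstar := fun x y => by
      simpa only [toBilin'_diagonal_apply] using hadj x y
    rw [hD] at hadj'
    exact hadj'.right_unique (separatingRight_toBilin'_diagonal hg)
      (isAdjointPair_diag_add_sum hg lam 𝒜 a)
  have hac : ∀ p ∈ 𝒜, a p * c p = 2 * trace ℝ _ D * A p := fun p hp => by
    rw [hA p hp]
    simp only [c]
    field_simp [hg p.1]
  have hsum : ∀ f : Fin n × Fin n → Module.End ℝ (Fin n → ℝ),
      ∑ p ∈ 𝒜, (a p * c p) • f p = (2 * trace ℝ _ D) • ∑ p ∈ 𝒜, A p • f p := fun f => by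
    rw [smul_sum]
    exact sum_congr rfl fun p hp => by rw [hac p hp, mul_smul]
  have hcommN := diag_mul_sub_mul_diag_sum lam a fun p hp => by rw [← neg_sub, hlam p hp]
  have hcommN' := diag_mul_sub_mul_diag_sum lam c hlam
  rw [trace_symmPart_identity hD hDstar hDs htr0 htr hcommN hcommN'
    (sum_smul_elemEnd_mul_self hA₁ hA₂ a) (sum_smul_elemEnd_swap_mul_self hA₁ hA₂ c),
    sum_smul_elemEnd_mul_swap hA₂, sum_smul_elemEnd_swap_mul hA₂, trace_sum_smul_elemEnd_self,
    sum_congr rfl hac, ← mul_sum]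
  simp only [mul_comm (c _), hsum, smul_sub, sum_sub_distrib]
  module

/-- Under the normalization `Tr D = Tr(D²) ≠ 0` and `λ i − λ j = Tr D` for `(i,j) ∈ 𝒜`,
setting `A_j^i = g_j a_{ji}² / (2 g_i Tr D)`, the endomorphism
`−Tr((D^s)²)·Id − ½[D,D*] + (Tr D)·D^s` equals
`(Tr D)·(−(1 + Σ A_j^i)·Id − Σ A_j^i (e^j⊗e_j − e^i⊗e_i) + Σ λ_i e^i⊗e_i)`. -/
theorem diagonal_part_identity
    {n : ℕ} (hn : 1 ≤ n) (𝒜 : Finset (Fin n × Fin n))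
    (hA₁ : ∀ p ∈ 𝒜, p.1 ≠ p.2)
    (hA₂ : ∀ p ∈ 𝒜, ∀ q ∈ 𝒜, p ≠ q →
      p.1 ≠ q.1 ∧ p.1 ≠ q.2 ∧ p.2 ≠ q.1 ∧ p.2 ≠ q.2)
    (lam : Fin n → ℝ) (a : Fin n × Fin n → ℝ) (ha : ∀ p ∈ 𝒜, a p ≠ 0)
    (D : Module.End ℝ (Fin n → ℝ))
    (hD : D = (∑ i, lam i • elemEnd i i) + ∑ p ∈ 𝒜, a p • elemEnd p.1 p.2)
    (htr : LinearMap.trace ℝ (Fin n → ℝ) D = LinearMap.trace ℝ (Fin n → ℝ) (D ^ 2))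
    (htr0 : LinearMap.trace ℝ (Fin n → ℝ) D ≠ 0)
    (hlam : ∀ p ∈ 𝒜, lam p.1 - lam p.2 = LinearMap.trace ℝ (Fin n → ℝ) D)
    (gv : Fin n → ℝ) (hg : ∀ i, gv i ≠ 0)
    (Dstar : Module.End ℝ (Fin n → ℝ))
    (hadj : ∀ x y : Fin n → ℝ,
      (∑ i, gv i * (D x) i * y i) = ∑ i, gv i * x i * (Dstar y) i)
    (Ds : Module.End ℝ (Fin n → ℝ)) (hDs : Ds = (1 / 2 : ℝ) • (D + Dstar))
    (A : Fin n × Fin n → ℝ)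
    (hA : ∀ p ∈ 𝒜, A p = gv p.2 * a p ^ 2 /
      (2 * gv p.1 * LinearMap.trace ℝ (Fin n → ℝ) D)) :
    (-(LinearMap.trace ℝ (Fin n → ℝ) (Ds ^ 2))) • (1 : Module.End ℝ (Fin n → ℝ)) +
        (-(1 / 2 : ℝ)) • (D * Dstar - Dstar * D) +
        LinearMap.trace ℝ (Fin n → ℝ) D • Ds =
      LinearMap.trace ℝ (Fin n → ℝ) D •
        ((-(1 + ∑ p ∈ 𝒜, A p)) • (1 : Module.End ℝ (Fin n → ℝ)) -
          (∑ p ∈ 𝒜, A p • (elemEnd p.2 p.2 - elemEnd p.1 p.1)) +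
          ∑ i, lam i • elemEnd i i) :=
  diagonal_part_identity_general 𝒜 hA₁ hA₂ lam a D hD htr htr0 hlam gv hg Dstar hadj Ds hDs A hA
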